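/- For all positive integers $n$, $p$, $r$, $\sum_{\ell=1}^{n} (\ell)^{(p)} H_{\ell}^{(r)} = \Bigl(\sum_{m=1}^{p} c(p,m) A(m,r,n)\Bigr) H_n^{(r)} - \sum_{m=1}^{p} c(p,m) B(m,r,n)$, where $(\ell)^{(p)} = \ell(\ell+1)\cdots(\ell+p-1)$ is the rising factorial, $c(p,m) = (-1)^{p+m} s(p,m)$ are the unsigned Stirling numbers of the first kind (so that $x^{(p)} = \sum_{m=0}^{p} c(p,m) x^{m}$), $A(m,r,n) = \sum_{\ell=0}^{m} S(m,\ell)\, \ell!\, \binom{n+r-1}{r-1}^{-1} \binom{r+\ell-1}{\ell} \binom{r+n}{r+\ell}$, and $B(m,r,n) = \sum_{\ell=0}^{m} \frac{1}{r+\ell} S(m,\ell)\, \ell!\, \binom{r+\ell-1}{\ell} \binom{r+n-1}{r+\ell}$. -/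

import Mathlib

/-- The harmonic number `H_n = ∑_{j=1}^n 1/j`. -/
noncomputable def harm (n : ℕ) : ℝ := ∑ j ∈ Finset.Icc 1 n, (1 : ℝ) / j

/-- The hyperharmonic numbers: `H_n^{(1)} = H_n` and
`H_n^{(r)} = ∑_{ℓ=1}^n H_ℓ^{(r-1)}` for `r ≥ 2` (so `H_0^{(r)} = 0`). -/
noncomputable def hyp : ℕ → ℕ → ℝ
  | 0, _ => 0
  | 1, n => harm n
  | r + 2, n => ∑ ℓ ∈ Finset.Icc 1 n, hyp (r + 1) ℓ

/-- The rising factorial `(x)^{(m)} = x (x+1) ⋯ (x+m-1)`, with `(x)^{(0)} = 1`. -/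
noncomputable def rise (x : ℝ) (m : ℕ) : ℝ := ∏ i ∈ Finset.range m, (x + i)

/-- The Stirling numbers of the second kind `S(n,m)`, via
`S(n+1, m+1) = S(n, m) + (m+1) S(n, m+1)`. -/
def stirS : ℕ → ℕ → ℕ
  | 0, 0 => 1
  | 0, _ + 1 => 0
  | _ + 1, 0 => 0
  | n + 1, m + 1 => stirS n m + (m + 1) * stirS n (m + 1)

/-- The unsigned Stirling numbers of the first kind `c(p,m)`, characterized by
`x(x+1)⋯(x+p-1) = ∑_{m=0}^p c(p,m) x^m`, via `c(n+1, k) = n c(n, k) + c(n, k-1)`. -/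
def stirC : ℕ → ℕ → ℕ
  | 0, 0 => 1
  | 0, _ + 1 => 0
  | n + 1, 0 => n * stirC n 0
  | n + 1, k + 1 => n * stirC n (k + 1) + stirC n k

/-- `A(m,r,n) = ∑_{ℓ=0}^m S(m,ℓ) ℓ! C(n+r-1, r-1)⁻¹ C(r+ℓ-1, ℓ) C(r+n, r+ℓ)`. -/
noncomputable def Acoef (m r n : ℕ) : ℝ :=
  ∑ ℓ ∈ Finset.range (m + 1),
    (stirS m ℓ : ℝ) * (Nat.factorial ℓ : ℝ) * ((n + r - 1).choose (r - 1) : ℝ)⁻¹ *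
      ((r + ℓ - 1).choose ℓ : ℝ) * ((r + n).choose (r + ℓ) : ℝ)

/-- `B(m,r,n) = ∑_{ℓ=0}^m (1/(r+ℓ)) S(m,ℓ) ℓ! C(r+ℓ-1, ℓ) C(r+n-1, r+ℓ)`. -/
noncomputable def Bcoef (m r n : ℕ) : ℝ :=
  ∑ ℓ ∈ Finset.range (m + 1),
    (1 / (r + ℓ : ℝ)) * (stirS m ℓ : ℝ) * (Nat.factorial ℓ : ℝ) *
      ((r + ℓ - 1).choose ℓ : ℝ) * ((r + n - 1).choose (r + ℓ) : ℝ)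


/-!
Write the order as `r + 1`. The closed form `H_k^{(r+1)} = C(k + r, r) (H_{k+r} - H_r)` turns
the sum into `∑ a_k h_k` with `h_k = H_{k+r} - H_r`, whose increments are `1 / (k + r + 1)`.
Expanding the rising factorial in powers (Stirling numbers of the first kind) reduces the claim
to the weights `k^m`, for which `a_k = k^m C(k + r, r)`. Expanding `k^m` in falling factorials
(Stirling numbers of the second kind) identifies the partial sums of `a_k` with the numerators
`A(m, r + 1, n) C(n + r, r)`, and Abel summation finishes the proof: by Pascal's rule the
correction terms add up to `B(m, r + 1, n)`.
-/

open Finset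

theorem stirS_eq_stirlingSecond : ∀ n k, stirS n k = Nat.stirlingSecond n k
  | 0, 0 | 0, _ + 1 | _ + 1, 0 => rfl
  | n + 1, k + 1 => by
    rw [stirS, Nat.stirlingSecond_succ_succ, stirS_eq_stirlingSecond n k,
      stirS_eq_stirlingSecond n (k + 1), add_comm]

theorem stirC_eq_stirlingFirst : ∀ n k, stirC n k = Nat.stirlingFirst n k
  | 0, 0 | 0, _ + 1 => rfl
  | n + 1, 0 => by rw [stirC, stirC_eq_stirlingFirst n 0]; cases n <;> rfl
  | n + 1, k + 1 => by
    rw [stirC, Nat.stirlingFirst_succ_succ, stirC_eq_stirlingFirst n k,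
      stirC_eq_stirlingFirst n (k + 1)]

theorem prod_range_add_eq_sum_stirlingFirst {R : Type*} [CommSemiring R] (x : R) (p : ℕ) :
    ∏ i ∈ range p, (x + i) = ∑ m ∈ range (p + 1), (Nat.stirlingFirst p m : R) * x ^ m := by
  induction p with
  | zero => simp
  | succ p ih =>
    let f : ℕ → R := fun m ↦ Nat.stirlingFirst p m * x ^ m
    have hshift : ∑ m ∈ range (p + 1), f m = ∑ m ∈ range (p + 1), f (m + 1) + f 0 := by
      rw [← sum_range_succ', sum_range_succ _ (p + 1)]
      simp [f, Nat.stirlingFirst_eq_zero_of_lt p.lt_succ_self]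
    have hzero : (p : R) * f 0 = 0 := by cases p <;> simp [f]
    calc ∏ i ∈ range (p + 1), (x + i)
        = x * ∑ m ∈ range (p + 1), f m + p * ∑ m ∈ range (p + 1), f m := by
          rw [prod_range_succ, ih]; ring
      _ = x * ∑ m ∈ range (p + 1), f m + p * ∑ m ∈ range (p + 1), f (m + 1) := by
          rw [hshift, mul_add (p : R), hzero, add_zero, ← hshift]
      _ = _ := by
          rw [sum_range_succ' _ (p + 1)]
          simp only [f, Nat.stirlingFirst_succ_succ, Nat.stirlingFirst_succ_zero, Nat.cast_add,
            Nat.cast_mul, Nat.cast_zero, zero_mul, add_zero, add_mul, sum_add_distrib, mul_sum]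
          rw [add_comm]
          congr 1 <;> exact sum_congr rfl fun _ _ ↦ by ring

theorem rise_eq_sum_stirC {p : ℕ} (hp : 1 ≤ p) (x : ℝ) :
    rise x p = ∑ m ∈ Icc 1 p, (stirC p m : ℝ) * x ^ m := by
  obtain ⟨p, rfl⟩ := Nat.exists_eq_add_of_le' hp
  rw [rise, prod_range_add_eq_sum_stirlingFirst, sum_range_succ', ← Ico_add_one_right_eq_Icc,
    sum_Ico_eq_sum_range]
  simp [stirC_eq_stirlingFirst, add_comm]

theorem pow_eq_sum_stirlingSecond_mul_descPochhammer_eval {R : Type*} [CommRing R] (x : R)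
    (m : ℕ) :
    x ^ m = ∑ k ∈ range (m + 1), (Nat.stirlingSecond m k : R) * (descPochhammer R k).eval x := by
  induction m with
  | zero => simp
  | succ m ih =>
    let f : ℕ → R := fun k ↦ Nat.stirlingSecond m k * (descPochhammer R k).eval x
    have hshift :
        ∑ k ∈ range (m + 1), k * f k = ∑ k ∈ range (m + 1), ((k : R) + 1) * f (k + 1) := by
      rw [sum_range_succ', sum_range_succ]
      simp [f, Nat.stirlingSecond_eq_zero_of_lt m.lt_succ_self]
    calc x ^ (m + 1) = ∑ k ∈ range (m + 1), f k * x := by rw [pow_succ, ih, sum_mul]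
      _ = ∑ k ∈ range (m + 1),
            (Nat.stirlingSecond m k * (descPochhammer R (k + 1)).eval x + k * f k) := by
          refine sum_congr rfl fun k _ ↦ ?_
          rw [descPochhammer_succ_eval]; ring
      _ = _ := by
          rw [sum_add_distrib, hshift, sum_range_succ' _ (m + 1), Nat.stirlingSecond_succ_zero,
            Nat.cast_zero, zero_mul, add_zero, ← sum_add_distrib]
          refine sum_congr rfl fun k _ ↦ ?_
          simp only [f, Nat.stirlingSecond_succ_succ]
          push_cast; ring

theorem Nat.pow_eq_sum_stirlingSecond_mul_descFactorial (n m : ℕ) :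
    n ^ m = ∑ k ∈ range (m + 1), Nat.stirlingSecond m k * n.descFactorial k := by
  have := pow_eq_sum_stirlingSecond_mul_descPochhammer_eval (n : ℤ) m
  simp only [descPochhammer_eval_eq_descFactorial] at this
  exact_mod_cast this

theorem Nat.cast_choose_div_add_one {K : Type*} [Field K] [CharZero K] (N k : ℕ) :
    (N.choose k : K) / (k + 1) = (N + 1).choose (k + 1) / (N + 1) := by
  rw [div_eq_div_iff (Nat.cast_add_one_ne_zero k) (Nat.cast_add_one_ne_zero N), mul_comm]
  exact_mod_cast N.add_one_mul_choose_eq k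

theorem harm_succ (n : ℕ) : harm (n + 1) = harm n + 1 / (n + 1) := by
  rw [harm, sum_Icc_succ_top (by omega), ← harm]
  push_cast
  rfl

theorem hyp_add_two_succ (r n : ℕ) :
    hyp (r + 2) (n + 1) = hyp (r + 2) n + hyp (r + 1) (n + 1) :=
  sum_Icc_succ_top (by omega) _

theorem hyp_succ_eq_choose_mul (r n : ℕ) :
    hyp (r + 1) n = (n + r).choose r * (harm (n + r) - harm r) := by
  induction r generalizing n with
  | zero => simp [hyp, harm]
  | succ r ih =>
    induction n with
    | zero => simp [hyp]
    | succ n ihn =>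
      have hpascal : ((n + r + 1 + 1).choose (r + 1) : ℝ) =
          (n + r + 1).choose r + (n + r + 1).choose (r + 1) := mod_cast Nat.choose_succ_succ' _ _
      have hdiv := Nat.cast_choose_div_add_one (K := ℝ) (n + r + 1) r
      rw [hyp_add_two_succ, ihn, ih, show n + 1 + (r + 1) = n + r + 1 + 1 by omega,
        show n + (r + 1) = n + r + 1 by omega, show n + 1 + r = n + r + 1 by omega,
        harm_succ (n + r + 1), harm_succ r]
      push_cast at hpascal hdiv ⊢
      linear_combination (harm r + 1 / ((r : ℝ) + 1) - harm (n + r + 1)) * hpascal + hdiv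

theorem Nat.add_choose_mul_choose_eq (r ℓ n : ℕ) :
    (r + ℓ).choose ℓ * (r + n).choose (r + ℓ) = n.choose ℓ * (r + n).choose r := by
  have h := Nat.choose_mul (n := r + n) (k := r + ℓ) (Nat.le_add_right r ℓ)
  rw [Nat.add_sub_cancel_left, Nat.add_sub_cancel_left, Nat.choose_symm_add] at h
  rw [mul_comm, h, mul_comm]

theorem sum_stirlingSecond_mul_choose (m r n : ℕ) :
    ∑ ℓ ∈ range (m + 1),
        Nat.stirlingSecond m ℓ * ℓ.factorial * (r + ℓ).choose ℓ * (r + n).choose (r + ℓ) =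
      n ^ m * (r + n).choose r := by
  rw [Nat.pow_eq_sum_stirlingSecond_mul_descFactorial, sum_mul]
  refine sum_congr rfl fun ℓ _ ↦ ?_
  rw [mul_assoc _ ((r + ℓ).choose ℓ), Nat.add_choose_mul_choose_eq,
    Nat.descFactorial_eq_factorial_mul_choose]
  ring

-- Indexed by `r` where `Acoef` has `r + 1`, to avoid truncated subtraction.
def acoefNum (m r n : ℕ) : ℕ :=
  ∑ ℓ ∈ range (m + 1),
    Nat.stirlingSecond m ℓ * ℓ.factorial * (r + ℓ).choose ℓ * (r + n + 1).choose (r + ℓ + 1)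

theorem acoefNum_succ (m r n : ℕ) :
    acoefNum m r (n + 1) = acoefNum m r n + (n + 1) ^ m * (n + 1 + r).choose r := by
  rw [add_comm (n + 1) r, ← sum_stirlingSecond_mul_choose, acoefNum, acoefNum,
    ← sum_add_distrib]
  refine sum_congr rfl fun ℓ _ ↦ ?_
  rw [Nat.choose_succ_succ', ← add_assoc r n 1]
  ring

theorem Acoef_mul_choose (m r n : ℕ) :
    Acoef m (r + 1) n * (n + r).choose r = acoefNum m r n := by
  have hne : ((n + r).choose r : ℝ) ≠ 0 := Nat.cast_ne_zero.mpr (Nat.choose_pos (by omega)).ne'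
  rw [Acoef, acoefNum, sum_mul]
  push_cast
  refine sum_congr rfl fun ℓ _ ↦ ?_
  rw [stirS_eq_stirlingSecond, show n + (r + 1) - 1 = n + r by omega,
    show r + 1 + ℓ - 1 = r + ℓ by omega, show r + 1 + n = r + n + 1 by omega,
    show r + 1 + ℓ = r + ℓ + 1 by omega]
  field_simp

theorem Bcoef_zero (m r : ℕ) : Bcoef m (r + 1) 0 = 0 :=
  sum_eq_zero fun ℓ _ ↦ by
    simp only [add_zero, Nat.add_sub_cancel, Nat.choose_eq_zero_of_lt (by omega : r < r + 1 + ℓ),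
      Nat.cast_zero, mul_zero]

theorem Bcoef_succ (m r n : ℕ) :
    Bcoef m (r + 1) (n + 1) = Bcoef m (r + 1) n + acoefNum m r n / (n + r + 1) := by
  rw [Bcoef, Bcoef, acoefNum, Nat.cast_sum, sum_div, ← sum_add_distrib]
  refine sum_congr rfl fun ℓ _ ↦ ?_
  rw [show r + 1 + (n + 1) - 1 = r + n + 1 by omega, show r + 1 + n - 1 = r + n by omega,
    show r + 1 + ℓ - 1 = r + ℓ by omega, show r + 1 + ℓ = r + ℓ + 1 by omega,
    stirS_eq_stirlingSecond]
  have hpascal : ((r + n + 1).choose (r + ℓ + 1) : ℝ) =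
      (r + n).choose (r + ℓ) + (r + n).choose (r + ℓ + 1) := mod_cast Nat.choose_succ_succ' _ _
  have hdiv := Nat.cast_choose_div_add_one (K := ℝ) (r + n) (r + ℓ)
  push_cast at hpascal hdiv ⊢
  linear_combination
    ((m.stirlingSecond ℓ : ℝ) * ℓ.factorial * (r + ℓ).choose ℓ) * (hpascal / (r + ℓ + 1) + hdiv)

theorem sum_Icc_mul_eq_by_parts {R : Type*} [CommRing R] {a h P Q : ℕ → R}
    (hP : ∀ k, P (k + 1) = P k + a (k + 1)) (hQ : ∀ k, Q (k + 1) = Q k + P k * (h (k + 1) - h k))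
    (h0 : P 0 * h 0 = Q 0) (n : ℕ) :
    ∑ k ∈ Icc 1 n, a k * h k = P n * h n - Q n := by
  induction n with
  | zero => simp [h0]
  | succ n ih =>
    rw [sum_Icc_succ_top (by omega), ih, hP, hQ]
    ring

theorem sum_pow_mul_hyp (m r n : ℕ) :
    ∑ k ∈ Icc 1 n, (k : ℝ) ^ m * hyp (r + 1) k =
      Acoef m (r + 1) n * hyp (r + 1) n - Bcoef m (r + 1) n := by
  have hby_parts := sum_Icc_mul_eq_by_parts (a := fun k ↦ (k : ℝ) ^ m * (k + r).choose r)
    (h := fun k ↦ harm (k + r) - harm r) (P := fun k ↦ acoefNum m r k) (Q := Bcoef m (r + 1))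
    (fun k ↦ by simp only [acoefNum_succ]; push_cast; ring)
    (fun k ↦ by rw [Bcoef_succ, add_right_comm k 1 r, harm_succ]; push_cast; ring)
    (by simp [Bcoef_zero]) n
  simpa only [hyp_succ_eq_choose_mul, ← mul_assoc, ← Acoef_mul_choose] using hby_parts

theorem sum_rise_mul_hyp_general (n p r : ℕ) (hp : 1 ≤ p) (hr : 1 ≤ r) :
    ∑ ℓ ∈ Finset.Icc 1 n, rise (ℓ : ℝ) p * hyp r ℓ =
      (∑ m ∈ Finset.Icc 1 p, (stirC p m : ℝ) * Acoef m r n) * hyp r n -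
        ∑ m ∈ Finset.Icc 1 p, (stirC p m : ℝ) * Bcoef m r n := by
  obtain ⟨r, rfl⟩ := Nat.exists_eq_add_of_le' hr
  calc ∑ ℓ ∈ Icc 1 n, rise (ℓ : ℝ) p * hyp (r + 1) ℓ
      = ∑ m ∈ Icc 1 p, (stirC p m : ℝ) * ∑ ℓ ∈ Icc 1 n, (ℓ : ℝ) ^ m * hyp (r + 1) ℓ := by
        simp only [rise_eq_sum_stirC hp, sum_mul, mul_sum, mul_assoc]
        exact sum_comm
    _ = ∑ m ∈ Icc 1 p,
          (stirC p m : ℝ) * (Acoef m (r + 1) n * hyp (r + 1) n - Bcoef m (r + 1) n) := by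
        simp only [sum_pow_mul_hyp]
    _ = _ := by
        rw [sum_mul, ← sum_sub_distrib]
        simp only [mul_sub, mul_assoc]

/-- For positive integers `n, p, r`,
`∑_{ℓ=1}^n (ℓ)^{(p)} H_ℓ^{(r)} = (∑_{m=1}^p c(p,m) A(m,r,n)) H_n^{(r)} - ∑_{m=1}^p c(p,m) B(m,r,n)`. -/
theorem sum_rise_mul_hyp (n p r : ℕ) (hn : 1 ≤ n) (hp : 1 ≤ p) (hr : 1 ≤ r) :
    ∑ ℓ ∈ Finset.Icc 1 n, rise (ℓ : ℝ) p * hyp r ℓ =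
      (∑ m ∈ Finset.Icc 1 p, (stirC p m : ℝ) * Acoef m r n) * hyp r n -
        ∑ m ∈ Finset.Icc 1 p, (stirC p m : ℝ) * Bcoef m r n :=
  sum_rise_mul_hyp_general n p r hp hr
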